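/- For every integer n ≥ 1 and all real numbers α and θ, the sum over all set partitions P of {1,…,n} of the weight W(P) := [∏_{i=0}^{#P−1} (θ + i·α)] · ∏_{b ∈ P} ∏_{i=1}^{#b−1} (i − α) equals the rising factorial θ^{↑n} = θ(θ+1)⋯(θ+n−1). (This is the normalization of Pitman's two-parameter (α,θ) partition distribution P_n(B;α,θ) = (θ/α)^{↑#B} ∏_{b∈B} (−(−α)^{↑#b}) / θ^{↑n}, written without dividing by α.) -/

import Mathlib

/-- The rising factorial `x^{↑n} = x(x+1)⋯(x+n−1)`. -/
def risingFactorial (x : ℝ) (n : ℕ) : ℝ := ∏ i ∈ Finset.range n, (x + i)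

/-!
Every partition of `insert a s` arises in exactly one way from a partition `P` of `s`, by letting
`a` either open a block of its own or join a block `b` of `P`. The first choice multiplies the
weight by `θ + kα`, where `k` is the number of blocks of `P`, the second by `#b - α`. As the
blocks of `P` partition `s`, these factors add up to `θ + kα + (#s - kα) = θ + #s`, whatever `P`
is, so adding an element multiplies the total weight by `θ + #s`.
-/

open Finset

namespace Finpartition

variable {X : Type*} [DecidableEq X] {s : Finset X} {a : X}

lemma parts_avoid_of_mem {P : Finpartition s} {b : Finset X} (hb : b ∈ P.parts) :
    (P.avoid b).parts = P.parts.erase b := by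
  ext c
  rw [mem_avoid, mem_erase]
  constructor
  · rintro ⟨d, hd, hdb, rfl⟩
    have hne : d ≠ b := fun h => hdb (h ▸ le_rfl)
    have hdis : Disjoint b d := (P.disjoint hd hb hne).symm
    rw [hdis.sdiff_eq_right]
    exact ⟨hne, hd⟩
  · rintro ⟨hcb, hc⟩
    have hdis : Disjoint c b := P.disjoint hc hb hcb
    exact ⟨c, hc, fun hle => P.ne_bot hc (hdis.eq_bot_of_le hle), hdis.symm.sdiff_eq_right⟩

lemma parts_avoid_singleton {Q : Finpartition s} {t : Finset X} (ht : t ∈ Q.parts)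
    (hat : a ∈ t) (hta : t ≠ {a}) :
    (Q.avoid {a}).parts = insert (t.erase a) (Q.parts.erase t) := by
  have erase_of_ne {c : Finset X} (hc : c ∈ Q.parts) (hne : c ≠ t) : c \ {a} = c := by
    rw [sdiff_singleton_eq_erase, erase_eq_of_notMem fun h => hne (Q.eq_of_mem_parts hc ht h hat)]
  ext c
  rw [mem_avoid, mem_insert, mem_erase]
  constructor
  · rintro ⟨d, hd, -, rfl⟩
    rcases eq_or_ne d t with rfl | hne
    · exact .inl (erase_eq d a).symm
    · exact .inr ⟨by rwa [erase_of_ne hd hne], by rwa [erase_of_ne hd hne]⟩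
  · rintro (rfl | ⟨hne, hc⟩)
    · refine ⟨t, ht, fun hle => hta (le_antisymm hle (singleton_subset_iff.2 hat)), ?_⟩
      exact (erase_eq t a).symm
    · refine ⟨c, hc, fun hle => ?_, erase_of_ne hc hne⟩
      obtain ⟨x, hx⟩ := Q.nonempty_of_mem_parts hc
      rw [mem_singleton.1 (hle hx)] at hx
      exact hne (Q.eq_of_mem_parts hc ht hx hat)

lemma singleton_notMem_parts (P : Finpartition s) (ha : a ∉ s) : {a} ∉ P.parts :=
  fun h => ha (P.le h (mem_singleton_self a))

lemma notMem_of_mem_parts {P : Finpartition s} {b : Finset X} (hb : b ∈ P.parts) (ha : a ∉ s) :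
    a ∉ b :=
  fun h => ha (P.le hb h)

def insertSingleton (P : Finpartition s) (ha : a ∉ s) : Finpartition (insert a s) :=
  P.extend (b := {a}) (singleton_ne_empty a) (disjoint_singleton_right.2 ha)
    (by rw [sup_eq_union, union_comm, ← insert_eq])

@[simp]
lemma parts_insertSingleton (P : Finpartition s) (ha : a ∉ s) :
    (P.insertSingleton ha).parts = insert {a} P.parts := rfl

/-- For `b ∉ P.parts` this is the junk value `P.insertSingleton ha`. -/
def insertInto (P : Finpartition s) (ha : a ∉ s) (b : Finset X) : Finpartition (insert a s) :=
  if hb : b ∈ P.parts then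
    (P.avoid b).extend (b := insert a b) (insert_ne_empty a b)
      (disjoint_insert_right.2 ⟨fun h => ha (sdiff_subset h), sdiff_disjoint⟩)
      (by rw [sup_eq_union, union_insert, sdiff_union_of_subset (P.le hb)])
  else P.insertSingleton ha

lemma parts_insertInto (P : Finpartition s) (ha : a ∉ s) {b : Finset X} (hb : b ∈ P.parts) :
    (P.insertInto ha b).parts = insert (insert a b) (P.parts.erase b) := by
  simp [insertInto, hb, extend, parts_avoid_of_mem hb]

def erase (Q : Finpartition (insert a s)) (ha : a ∉ s) : Finpartition s :=
  (Q.avoid {a}).copy (by rw [← Finset.erase_eq, erase_insert ha])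

lemma parts_erase (Q : Finpartition (insert a s)) (ha : a ∉ s) :
    (Q.erase ha).parts = (Q.avoid {a}).parts := rfl

lemma part_insertSingleton (P : Finpartition s) (ha : a ∉ s) :
    (P.insertSingleton ha).part a = {a} :=
  part_eq_of_mem _ (mem_insert_self _ _) (mem_singleton_self a)

lemma insert_ne_singleton_of_mem_parts {P : Finpartition s} {b : Finset X} (hb : b ∈ P.parts)
    (ha : a ∉ s) : insert a b ≠ {a} := by
  intro h
  obtain ⟨x, hx⟩ := P.nonempty_of_mem_parts hb
  have hxa : x = a := mem_singleton.1 (h ▸ mem_insert_of_mem hx)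
  exact ha (hxa ▸ P.le hb hx)

lemma part_insertInto (P : Finpartition s) (ha : a ∉ s) {b : Finset X} (hb : b ∈ P.parts) :
    (P.insertInto ha b).part a = insert a b :=
  part_eq_of_mem _ (by rw [parts_insertInto P ha hb]; exact mem_insert_self _ _)
    (mem_insert_self a b)

lemma erase_insertSingleton (P : Finpartition s) (ha : a ∉ s) :
    (P.insertSingleton ha).erase ha = P := by
  ext : 1
  rw [parts_erase, parts_avoid_of_mem (by simp), parts_insertSingleton,
    Finset.erase_insert (P.singleton_notMem_parts ha)]

lemma insertSingleton_erase (Q : Finpartition (insert a s)) (ha : a ∉ s) (h : Q.part a = {a}) :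
    (Q.erase ha).insertSingleton ha = Q := by
  have hmem : {a} ∈ Q.parts := h ▸ Q.part_mem.2 (mem_insert_self a s)
  ext : 1
  rw [parts_insertSingleton, parts_erase, parts_avoid_of_mem hmem, insert_erase hmem]

lemma erase_insertInto (P : Finpartition s) (ha : a ∉ s) {b : Finset X} (hb : b ∈ P.parts) :
    (P.insertInto ha b).erase ha = P := by
  have hmem : insert a b ∈ (P.insertInto ha b).parts := by
    rw [parts_insertInto P ha hb]; exact mem_insert_self _ _
  ext : 1
  rw [parts_erase, parts_avoid_singleton hmem (mem_insert_self a b)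
      (insert_ne_singleton_of_mem_parts hb ha), parts_insertInto P ha hb,
    Finset.erase_insert (notMem_of_mem_parts hb ha),
    Finset.erase_insert fun h => ha (P.le (mem_of_mem_erase h) (mem_insert_self a b)),
    insert_erase hb]

lemma erase_part_mem_parts_erase (Q : Finpartition (insert a s)) (ha : a ∉ s)
    (h : Q.part a ≠ {a}) : (Q.part a).erase a ∈ (Q.erase ha).parts := by
  rw [parts_erase, parts_avoid_singleton (Q.part_mem.2 (mem_insert_self a s))
    (Q.mem_part (mem_insert_self a s)) h]
  exact mem_insert_self _ _

lemma insertInto_erase (Q : Finpartition (insert a s)) (ha : a ∉ s) (h : Q.part a ≠ {a}) :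
    (Q.erase ha).insertInto ha ((Q.part a).erase a) = Q := by
  have hat : a ∈ Q.part a := Q.mem_part (mem_insert_self a s)
  have ht : Q.part a ∈ Q.parts := Q.part_mem.2 (mem_insert_self a s)
  have hb : (Q.part a).erase a ∉ Q.parts := fun hmem =>
    ((Q.erase ha).nonempty_of_mem_parts (erase_part_mem_parts_erase Q ha h)).ne_empty <|
      (Q.disjoint hmem ht fun he => notMem_erase a _ (he ▸ hat)).eq_bot_of_le (erase_subset a _)
  ext : 1
  rw [parts_insertInto _ ha (erase_part_mem_parts_erase Q ha h), insert_erase hat, parts_erase,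
    parts_avoid_singleton ht hat h, Finset.erase_insert fun hmem => hb (mem_of_mem_erase hmem),
    insert_erase ht]

variable {M : Type*} [AddCommMonoid M]

lemma sum_filter_part_eq_singleton (ha : a ∉ s) (f : Finpartition (insert a s) → M) :
    ∑ Q with Q.part a = {a}, f Q = ∑ P : Finpartition s, f (P.insertSingleton ha) := by
  refine sum_nbij' (fun Q => Q.erase ha) (fun P => P.insertSingleton ha)
    (fun _ _ => mem_univ _) (fun P _ => ?_) (fun Q hQ => ?_) (fun P _ => ?_) (fun Q hQ => ?_)
  · exact mem_filter.2 ⟨mem_univ _, P.part_insertSingleton ha⟩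
  · exact Q.insertSingleton_erase ha (mem_filter.1 hQ).2
  · exact P.erase_insertSingleton ha
  · rw [Q.insertSingleton_erase ha (mem_filter.1 hQ).2]

lemma sum_filter_part_ne_singleton (ha : a ∉ s) (f : Finpartition (insert a s) → M) :
    ∑ Q with Q.part a ≠ {a}, f Q =
      ∑ P : Finpartition s, ∑ b ∈ P.parts, f (P.insertInto ha b) := by
  rw [sum_sigma']
  refine sum_nbij' (fun Q => ⟨Q.erase ha, (Q.part a).erase a⟩) (fun x => x.1.insertInto ha x.2)
    (fun Q hQ => ?_) (fun x hx => ?_) (fun Q hQ => ?_) (fun x hx => ?_) (fun Q hQ => ?_)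
  · exact mem_sigma.2 ⟨mem_univ _, Q.erase_part_mem_parts_erase ha (mem_filter.1 hQ).2⟩
  · have hb := (mem_sigma.1 hx).2
    refine mem_filter.2 ⟨mem_univ _, ?_⟩
    rw [x.1.part_insertInto ha hb]
    exact insert_ne_singleton_of_mem_parts hb ha
  · exact Q.insertInto_erase ha (mem_filter.1 hQ).2
  · have hb := (mem_sigma.1 hx).2
    refine Sigma.ext (x.1.erase_insertInto ha hb) (heq_of_eq ?_)
    rw [x.1.part_insertInto ha hb, Finset.erase_insert (notMem_of_mem_parts hb ha)]
  · rw [Q.insertInto_erase ha (mem_filter.1 hQ).2]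

theorem sum_univ_insert (ha : a ∉ s) (f : Finpartition (insert a s) → M) :
    ∑ Q, f Q =
      ∑ P : Finpartition s,
        (f (P.insertSingleton ha) + ∑ b ∈ P.parts, f (P.insertInto ha b)) := by
  rw [← sum_filter_add_sum_filter_not univ (fun Q => Q.part a = {a}),
    sum_filter_part_eq_singleton ha, sum_filter_part_ne_singleton ha, sum_add_distrib]

end Finpartition

section PitmanWeight

variable {R : Type*} [CommRing R] {X : Type*} [DecidableEq X] {s : Finset X} {a : X}

def pitmanWeight (α θ : R) (P : Finpartition s) : R :=
  (∏ i ∈ range #P.parts, (θ + i * α)) *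
    ∏ b ∈ P.parts, ∏ i ∈ range (#b - 1), ((i : R) + 1 - α)

lemma pitmanWeight_insertSingleton (α θ : R) (P : Finpartition s) (ha : a ∉ s) :
    pitmanWeight α θ (P.insertSingleton ha) = (θ + #P.parts * α) * pitmanWeight α θ P := by
  have hnew := P.singleton_notMem_parts ha
  simp only [pitmanWeight, Finpartition.parts_insertSingleton, card_insert_of_notMem hnew,
    prod_range_succ, prod_insert hnew, card_singleton, Nat.sub_self, range_zero, prod_empty]
  ring

lemma pitmanWeight_insertInto (α θ : R) (P : Finpartition s) (ha : a ∉ s) {b : Finset X}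
    (hb : b ∈ P.parts) :
    pitmanWeight α θ (P.insertInto ha b) = (#b - α) * pitmanWeight α θ P := by
  have hnew : insert a b ∉ P.parts.erase b :=
    fun h => ha (P.le (mem_of_mem_erase h) (mem_insert_self a b))
  obtain ⟨k, hk⟩ : ∃ k, #b = k + 1 :=
    Nat.exists_eq_add_one.2 (P.nonempty_of_mem_parts hb).card_pos
  rw [pitmanWeight, pitmanWeight, P.parts_insertInto ha hb, card_insert_of_notMem hnew,
    card_erase_add_one hb, prod_insert hnew, card_insert_of_notMem (P.notMem_of_mem_parts hb ha),
    Nat.add_sub_cancel, ← mul_prod_erase P.parts _ hb, hk, Nat.add_sub_cancel, prod_range_succ]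
  push_cast
  ring

theorem sum_pitmanWeight_insert (α θ : R) (ha : a ∉ s) :
    ∑ Q : Finpartition (insert a s), pitmanWeight α θ Q =
      (θ + #s) * ∑ P : Finpartition s, pitmanWeight α θ P := by
  rw [Finpartition.sum_univ_insert ha, mul_sum]
  refine sum_congr rfl fun P _ => ?_
  have hblocks : ∑ b ∈ P.parts, ((#b : R) - α) = #s - #P.parts * α := by
    rw [sum_sub_distrib, sum_const, nsmul_eq_mul, ← Nat.cast_sum, P.sum_card_parts]
  rw [pitmanWeight_insertSingleton, sum_congr rfl fun b hb => pitmanWeight_insertInto α θ P ha hb,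
    ← sum_mul, hblocks]
  ring

theorem sum_pitmanWeight (α θ : R) (s : Finset X) :
    ∑ P : Finpartition s, pitmanWeight α θ P = ∏ i ∈ range #s, (θ + i) := by
  induction s using Finset.induction_on with
  | empty =>
    rw [← bot_eq_empty, Fintype.sum_unique, pitmanWeight,
      Finpartition.parts_eq_empty_iff.2 rfl]
    simp
  | insert a s ha ih =>
    rw [sum_pitmanWeight_insert α θ ha, ih, card_insert_of_notMem ha, prod_range_succ, mul_comm]

end PitmanWeight

theorem pitman_two_parameter_normalization_general (n : ℕ) (α θ : ℝ) :
    ∑ P : Finpartition (Finset.univ : Finset (Fin n)),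
      (∏ i ∈ Finset.range P.parts.card, (θ + i * α)) *
        ∏ b ∈ P.parts, ∏ i ∈ Finset.range (b.card - 1), ((i : ℝ) + 1 - α) =
    risingFactorial θ n := by
  have h := sum_pitmanWeight α θ (univ : Finset (Fin n))
  rwa [card_univ, Fintype.card_fin] at h

/-- Normalization of Pitman's two-parameter `(α,θ)` partition distribution: the weights
`W(P) = [∏_{i=0}^{#P−1}(θ+iα)] ∏_{b∈P} ∏_{i=1}^{#b−1}(i−α)` on set partitions of `[n]`
sum to `θ^{↑n}`. -/
theorem pitman_two_parameter_normalization (n : ℕ) (hn : 1 ≤ n) (α θ : ℝ) :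
    ∑ P : Finpartition (Finset.univ : Finset (Fin n)),
      (∏ i ∈ Finset.range P.parts.card, (θ + i * α)) *
        ∏ b ∈ P.parts, ∏ i ∈ Finset.range (b.card - 1), ((i : ℝ) + 1 - α) =
    risingFactorial θ n :=
  pitman_two_parameter_normalization_general n α θ
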